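/- Let g be an M♮-convex function with finite nonempty effective domain and let b : E → {0,1}. If there exists no transition with respect to a point x ∈ dom g, then k̲ = ⟨b,x⟩. -/

import Mathlib

open scoped BigOperators

/-- Characteristic vector of a singleton `{u}`. -/
def chiv {E : Type*} [DecidableEq E] (u : E) : E → ℤ := fun e => if e = u then 1 else 0

/-- Characteristic vector allowing the dummy symbol `z` (modelled as `none`), with `χ_z = 0`. -/
def chiOpt {E : Type*} [DecidableEq E] (v : Option E) : E → ℤ :=
  fun e => match v with
  | none => 0
  | some w => chiv w e

/-- M♮-convexity (with nonempty effective domain) for `g : (E → ℤ) → ℝ ∪ {+∞}`. -/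
def MnatConvex {E : Type*} [DecidableEq E] (g : (E → ℤ) → WithTop ℝ) : Prop :=
  (∃ x, g x < ⊤) ∧
  ∀ x y : E → ℤ, g x < ⊤ → g y < ⊤ → ∀ u : E, y u < x u →
    (g (x - chiv u) + g (y + chiv u) ≤ g x + g y) ∨
    (∃ v : E, x v < y v ∧
      g (x - chiv u + chiv v) + g (y + chiv u - chiv v) ≤ g x + g y)

/-- `⟨b,x⟩ = ∑ e, b e * x e`. -/
def innerb {E : Type*} [Fintype E] (b : E → ℤ) (x : E → ℤ) : ℤ := ∑ e, b e * x e

/-- `𝒯_i`: the minimizers of `g` on `𝒫_i = {x ∈ dom g : ⟨b,x⟩ = i}`. -/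
def Tset {E : Type*} [Fintype E] (g : (E → ℤ) → WithTop ℝ) (b : E → ℤ) (i : ℤ) :
    Set (E → ℤ) :=
  {x | g x < ⊤ ∧ innerb b x = i ∧ ∀ y : E → ℤ, g y < ⊤ → innerb b y = i → g x ≤ g y}

/-- A transition `(u,v)` with respect to `x`: `u ∈ E₁`, `v ∈ E₀ ∪ {z}`, and
`x - χ_u + χ_v ∈ dom g`. -/
def IsTransition {E : Type*} [DecidableEq E] (g : (E → ℤ) → WithTop ℝ) (b : E → ℤ)
    (x : E → ℤ) (u : E) (v : Option E) : Prop :=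
  b u = 1 ∧ (∀ w : E, v = some w → b w = 0) ∧ g (x - chiv u + chiOpt v) < ⊤

/-- The cost `g(x;u,v) = g(x - χ_u + χ_v) - g(x)` of a transition (as a real number;
both values are finite for transitions with respect to `x ∈ dom g`). -/
noncomputable def transCost {E : Type*} [DecidableEq E] (g : (E → ℤ) → WithTop ℝ)
    (x : E → ℤ) (u : E) (v : Option E) : ℝ :=
  WithTop.untopD 0 (g (x - chiv u + chiOpt v)) - WithTop.untopD 0 (g x)

/-- A minimum transition with respect to `x`. -/
def IsMinTransition {E : Type*} [Fintype E] [DecidableEq E] (g : (E → ℤ) → WithTop ℝ)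
    (b : E → ℤ) (x : E → ℤ) (u : E) (v : Option E) : Prop :=
  IsTransition g b x u v ∧
    ∀ (u' : E) (v' : Option E), IsTransition g b x u' v' →
      transCost g x u v ≤ transCost g x u' v'

/-!
If `⟨b,y⟩ < ⟨b,x⟩` for some `y ∈ dom g`, pick `u ∈ E₁` with `y(u) < x(u)` and apply the
M♮-exchange to `x, y, u`. Either exchange yields a transition at `x`, except when the partner
`v` lies in `E₁`; then `y + χ_u - χ_v ∈ dom g` has the same `⟨b,·⟩` and is strictly closer to `x`
in `ℓ₁`. Descending on the distance shows that `x` minimizes `⟨b,·⟩` over `dom g`, hence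
`k̲ = ⟨b,x⟩`, the level `⟨b,x⟩` being attained because `dom g` is finite.
-/

lemma WithTop.lt_top_of_add_le_add {α : Type*} [Add α] [Preorder α] {a a' c c' : WithTop α}
    (h : a' + c' ≤ a + c) (ha : a < ⊤) (hc : c < ⊤) : a' < ⊤ ∧ c' < ⊤ :=
  WithTop.add_lt_top.mp (h.trans_lt (WithTop.add_lt_top.mpr ⟨ha, hc⟩))

section

variable {E : Type*} [DecidableEq E] {g : (E → ℤ) → WithTop ℝ} {b x : E → ℤ} {u : E}

lemma isTransition_none (hbu : b u = 1) (h : g (x - chiv u) < ⊤) :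
    IsTransition g b x u none := by
  refine ⟨hbu, by simp, ?_⟩
  rwa [show chiOpt (none : Option E) = 0 from rfl, add_zero]

lemma isTransition_some {v : E} (hbu : b u = 1) (hbv : b v = 0)
    (h : g (x - chiv u + chiv v) < ⊤) : IsTransition g b x u (some v) :=
  ⟨hbu, fun _ h => Option.some_injective _ h ▸ hbv, h⟩

end

section

variable {E : Type*} [Fintype E]

lemma innerb_add (b x y : E → ℤ) : innerb b (x + y) = innerb b x + innerb b y := by
  simp only [innerb, Pi.add_apply, mul_add, Finset.sum_add_distrib]

lemma innerb_sub (b x y : E → ℤ) : innerb b (x - y) = innerb b x - innerb b y := by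
  simp only [innerb, Pi.sub_apply, mul_sub, Finset.sum_sub_distrib]

lemma exists_lt_of_innerb_lt {b x y : E → ℤ} (hb : ∀ e, b e = 0 ∨ b e = 1)
    (h : innerb b y < innerb b x) : ∃ u, b u = 1 ∧ y u < x u := by
  have hpos : ∑ _e : E, (0 : ℤ) < innerb b (x - y) := by
    rw [Finset.sum_const_zero, innerb_sub]
    linarith
  obtain ⟨u, -, hu⟩ := Finset.exists_lt_of_sum_lt hpos
  rcases hb u with hbu | hbu <;> simp [hbu] at hu
  exact ⟨u, hbu, by linarith⟩

lemma Tset_innerb_nonempty {g : (E → ℤ) → WithTop ℝ} {b x : E → ℤ}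
    (hfin : {x : E → ℤ | g x < ⊤}.Finite) (hx : g x < ⊤) :
    (Tset g b (innerb b x)).Nonempty := by
  obtain ⟨y, ⟨hy, hby⟩, hmin⟩ := Set.exists_min_image {y | g y < ⊤ ∧ innerb b y = innerb b x}
    g (hfin.subset fun _ h => h.1) ⟨x, hx, rfl⟩
  exact ⟨y, hy, hby, fun y' hy' hby' => hmin y' ⟨hy', hby'⟩⟩

def l1Dist (x y : E → ℤ) : ℕ := ∑ e, (x e - y e).natAbs

variable [DecidableEq E]

lemma innerb_chiv (b : E → ℤ) (u : E) : innerb b (chiv u) = b u := by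
  simp [innerb, chiv, mul_ite]

lemma l1Dist_add_chiv_sub_chiv_lt {x y : E → ℤ} {u v : E} (hu : y u < x u) (hv : x v < y v) :
    l1Dist x (y + chiv u - chiv v) < l1Dist x y := by
  unfold l1Dist
  refine Finset.sum_lt_sum (fun e _ => ?_) ⟨u, Finset.mem_univ u, ?_⟩ <;>
    simp only [Pi.add_apply, Pi.sub_apply, chiv] <;> split_ifs <;> subst_vars <;> omega

variable {g : (E → ℤ) → WithTop ℝ} {b x : E → ℤ}

lemma exists_closer_of_innerb_lt (hg : MnatConvex g) (hb : ∀ e, b e = 0 ∨ b e = 1)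
    (hx : g x < ⊤) (hno : ¬∃ (u : E) (v : Option E), IsTransition g b x u v)
    {y : E → ℤ} (hy : g y < ⊤) (hlt : innerb b y < innerb b x) :
    ∃ y', g y' < ⊤ ∧ innerb b y' = innerb b y ∧ l1Dist x y' < l1Dist x y := by
  obtain ⟨u, hbu, hu⟩ := exists_lt_of_innerb_lt hb hlt
  rcases hg.2 x y hx hy u hu with h | ⟨v, hv, h⟩
  · exact absurd ⟨u, none, isTransition_none hbu (WithTop.lt_top_of_add_le_add h hx hy).1⟩ hno
  obtain ⟨hx', hy'⟩ := WithTop.lt_top_of_add_le_add h hx hy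
  rcases hb v with hbv | hbv
  · exact absurd ⟨u, some v, isTransition_some hbu hbv hx'⟩ hno
  refine ⟨_, hy', ?_, l1Dist_add_chiv_sub_chiv_lt hu hv⟩
  rw [innerb_sub, innerb_add, innerb_chiv, innerb_chiv, hbu, hbv, add_sub_cancel_right]

lemma innerb_le_of_not_exists_transition (hg : MnatConvex g) (hb : ∀ e, b e = 0 ∨ b e = 1)
    (hx : g x < ⊤) (hno : ¬∃ (u : E) (v : Option E), IsTransition g b x u v)
    {y : E → ℤ} (hy : g y < ⊤) : innerb b x ≤ innerb b y := by
  induction hd : l1Dist x y using Nat.strong_induction_on generalizing y with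
  | _ n ih =>
    by_contra! hlt
    obtain ⟨y', hy', hby', hd'⟩ := exists_closer_of_innerb_lt hg hb hx hno hy hlt
    exact (ih _ (hd ▸ hd') hy' rfl).not_gt (hby' ▸ hlt)

end

theorem stmt_1_general {E : Type*} [Fintype E] [DecidableEq E]
    (g : (E → ℤ) → WithTop ℝ) (b : E → ℤ)
    (hg : MnatConvex g)
    (hfin : {x : E → ℤ | g x < ⊤}.Finite)
    (hb : ∀ e : E, b e = 0 ∨ b e = 1)
    (kmin : ℤ)
    (hkmin : (Tset g b kmin).Nonempty ∧ ∀ k : ℤ, (Tset g b k).Nonempty → kmin ≤ k)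
    (x : E → ℤ) (hx : g x < ⊤)
    (hno : ¬∃ (u : E) (v : Option E), IsTransition g b x u v) :
    kmin = innerb b x := by
  obtain ⟨⟨y, hy, rfl, -⟩, hmin⟩ := hkmin
  exact le_antisymm (hmin _ (Tset_innerb_nonempty hfin hx))
    (innerb_le_of_not_exists_transition hg hb hx hno hy)

/-- if there is no transition with respect to `x ∈ dom g`,
then `k̲ = ⟨b,x⟩`. -/
theorem stmt_1 {E : Type*} [Fintype E] [DecidableEq E] [Nonempty E]
    (g : (E → ℤ) → WithTop ℝ) (b : E → ℤ)
    (hg : MnatConvex g)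
    (hfin : {x : E → ℤ | g x < ⊤}.Finite)
    (hb : ∀ e : E, b e = 0 ∨ b e = 1)
    (kmin : ℤ)
    (hkmin : (Tset g b kmin).Nonempty ∧ ∀ k : ℤ, (Tset g b k).Nonempty → kmin ≤ k)
    (x : E → ℤ) (hx : g x < ⊤)
    (hno : ¬∃ (u : E) (v : Option E), IsTransition g b x u v) :
    kmin = innerb b x :=
  stmt_1_general g b hg hfin hb kmin hkmin x hx hno
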